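/- arXiv:1312.7765 — 3 statements merged into one kernel-verified Lean document; each statement's English description precedes it below -/
import Mathlib

section
/- Let C be a regular category with projective cover P. The assignments N ↦ N^C and M ↦ M_P establish an order isomorphism between the poset of ideals of P admitting weak kernels and the poset of ideals of C admitting kernels and for which all regular epimorphisms are saturating. -/
open CategoryTheory CategoryTheory.Limits

universe v u

variable {C : Type u} [Category.{v} C]

/-- A class of morphisms of a category. -/
abbrev MorClass (C : Type u) [Category.{v} C] :=
  ∀ ⦃X Y : C⦄, (X ⟶ Y) → Prop

/-- An ideal of morphisms: closed under pre- and post-composition with arbitrary morphisms. -/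
def IsMorIdeal (N : MorClass C) : Prop :=
  (∀ ⦃X Y Z : C⦄ (f : X ⟶ Y) (g : Y ⟶ Z), N g → N (f ≫ g)) ∧
  (∀ ⦃X Y Z : C⦄ (f : X ⟶ Y) (g : Y ⟶ Z), N f → N (f ≫ g))

/-- `k` is a weak `N`-kernel of `f`. -/
def IsWeakKernel (N : MorClass C) {K X Y : C} (f : X ⟶ Y) (k : K ⟶ X) : Prop :=
  N (k ≫ f) ∧ ∀ ⦃K' : C⦄ (k' : K' ⟶ X), N (k' ≫ f) → ∃ u : K' ⟶ K, u ≫ k = k'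

/-- `k` is an `N`-kernel of `f` (unique factorization). -/
def IsNKernel (N : MorClass C) {K X Y : C} (f : X ⟶ Y) (k : K ⟶ X) : Prop :=
  N (k ≫ f) ∧ ∀ ⦃K' : C⦄ (k' : K' ⟶ X), N (k' ≫ f) → ∃! u : K' ⟶ K, u ≫ k = k'

def HasWeakKernels (N : MorClass C) : Prop :=
  ∀ ⦃X Y : C⦄ (f : X ⟶ Y), ∃ (K : C) (k : K ⟶ X), IsWeakKernel N f k

def HasNKernels (N : MorClass C) : Prop :=
  ∀ ⦃X Y : C⦄ (f : X ⟶ Y), ∃ (K : C) (k : K ⟶ X), IsNKernel N f k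

/-- The condition (∗π₀) for a pair of parallel morphisms: for a weak `N`-kernel `k` of `f₁`
and any morphism `g`, `g f₁ k = g f₂ k ⟺ g f₁ = g f₂`. -/
def StarPi0 (N : MorClass C) {X Y : C} (f₁ f₂ : X ⟶ Y) : Prop :=
  ∀ ⦃K : C⦄ (k : K ⟶ X), IsWeakKernel N f₁ k →
    ∀ ⦃Z : C⦄ (g : Y ⟶ Z), (k ≫ f₁ ≫ g = k ≫ f₂ ≫ g ↔ f₁ ≫ g = f₂ ≫ g)

/-- `(u, v)` is a weak kernel pair of `f`. -/
def IsWeakKernelPair {P X Y : C} (f : X ⟶ Y) (u v : P ⟶ X) : Prop :=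
  u ≫ f = v ≫ f ∧ ∀ ⦃Q : C⦄ (u' v' : Q ⟶ X), u' ≫ f = v' ≫ f →
    ∃ w : Q ⟶ P, w ≫ u = u' ∧ w ≫ v = v'

/-- `(u, v)` is the kernel pair of `f`. -/
def IsKernelPairOf {P X Y : C} (f : X ⟶ Y) (u v : P ⟶ X) : Prop :=
  u ≫ f = v ≫ f ∧ ∀ ⦃Q : C⦄ (u' v' : Q ⟶ X), u' ≫ f = v' ≫ f →
    ∃! w : Q ⟶ P, w ≫ u = u' ∧ w ≫ v = v'

def HasWeakKernelPairs (C : Type u) [Category.{v} C] : Prop :=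
  ∀ ⦃X Y : C⦄ (f : X ⟶ Y), ∃ (P : C) (u v : P ⟶ X), IsWeakKernelPair f u v

def HasKernelPairs (C : Type u) [Category.{v} C] : Prop :=
  ∀ ⦃X Y : C⦄ (f : X ⟶ Y), ∃ (P : C) (u v : P ⟶ X), IsKernelPairOf f u v

/-- `f` is a coequalizer of the pair `(u, v)`. -/
def IsCoequalizerOf {P X Y : C} (u v : P ⟶ X) (f : X ⟶ Y) : Prop :=
  u ≫ f = v ≫ f ∧ ∀ ⦃Z : C⦄ (g : X ⟶ Z), u ≫ g = v ≫ g → ∃! h : Y ⟶ Z, f ≫ h = g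

/-- `f` is a regular epimorphism: a coequalizer of some pair. -/
def IsRegEpi {X Y : C} (f : X ⟶ Y) : Prop :=
  ∃ (P : C) (u v : P ⟶ X), IsCoequalizerOf u v f

/-- `(p₁, p₂)` is a pullback of `(f, g)`. -/
def IsPullbackSq {P X Y Z : C} (p₁ : P ⟶ X) (p₂ : P ⟶ Y) (f : X ⟶ Z) (g : Y ⟶ Z) : Prop :=
  p₁ ≫ f = p₂ ≫ g ∧ ∀ ⦃Q : C⦄ (q₁ : Q ⟶ X) (q₂ : Q ⟶ Y), q₁ ≫ f = q₂ ≫ g →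
    ∃! w : Q ⟶ P, w ≫ p₁ = q₁ ∧ w ≫ p₂ = q₂

/-- A regular category: finitely complete, kernel pairs have coequalizers, and
regular epimorphisms are stable under pullback. -/
structure IsRegularCat (C : Type u) [Category.{v} C] : Prop where
  hasFiniteLimits : HasFiniteLimits C
  coeqOfKernelPairs : ∀ ⦃P X Y : C⦄ (f : X ⟶ Y) (u v : P ⟶ X), IsKernelPairOf f u v →
    ∃ (Q : C) (q : X ⟶ Q), IsCoequalizerOf u v q
  regEpiStable : ∀ ⦃P X Y Z : C⦄ (p₁ : P ⟶ X) (p₂ : P ⟶ Y) (f : X ⟶ Z) (g : Y ⟶ Z),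
    IsPullbackSq p₁ p₂ f g → IsRegEpi g → IsRegEpi p₁

/-- `P` (a class of objects, regarded as a full subcategory) is a projective cover of `C`. -/
structure IsProjectiveCover (P : Set C) : Prop where
  proj : ∀ ⦃X : C⦄, X ∈ P → ∀ ⦃A B : C⦄ (e : A ⟶ B), IsRegEpi e →
    ∀ f : X ⟶ B, ∃ g : X ⟶ A, g ≫ e = f
  covers : ∀ X : C, ∃ (Q : C) (_ : Q ∈ P) (e : Q ⟶ X), IsRegEpi e

/-- An ideal of the full subcategory on `P`, encoded as a class of morphisms of `C`
supported on `P`-objects and closed under composition with `P`-morphisms. -/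
def IsMorIdealOn (P : Set C) (N : MorClass C) : Prop :=
  (∀ ⦃X Y : C⦄ (f : X ⟶ Y), N f → X ∈ P ∧ Y ∈ P) ∧
  (∀ ⦃X Y Z : C⦄ (f : X ⟶ Y) (g : Y ⟶ Z), X ∈ P → N g → N (f ≫ g)) ∧
  (∀ ⦃X Y Z : C⦄ (f : X ⟶ Y) (g : Y ⟶ Z), Z ∈ P → N f → N (f ≫ g))

/-- The extension `N^C` of an ideal `N` of the full subcategory `P` to `C`. -/
def extClass (P : Set C) (N : MorClass C) : MorClass C := fun X Y f =>
  ∃ (A B : C) (_ : A ∈ P) (_ : B ∈ P) (n : A ⟶ B) (e : A ⟶ X) (e' : B ⟶ Y),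
    IsRegEpi e ∧ IsRegEpi e' ∧ N n ∧ e ≫ f = n ≫ e'

/-- The restriction `M_P` of an ideal `M` of `C` to the full subcategory `P`. -/
def restClass (P : Set C) (M : MorClass C) : MorClass C := fun X Y f =>
  X ∈ P ∧ Y ∈ P ∧ M f

/-- `k` is a weak `N`-kernel of `f` computed in the full subcategory `P`. -/
def IsWeakKernelOn (P : Set C) (N : MorClass C) {K X Y : C} (f : X ⟶ Y) (k : K ⟶ X) : Prop :=
  K ∈ P ∧ N (k ≫ f) ∧ ∀ ⦃K' : C⦄, K' ∈ P → ∀ k' : K' ⟶ X, N (k' ≫ f) →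
    ∃ u : K' ⟶ K, u ≫ k = k'

def HasWeakKernelsOn (P : Set C) (N : MorClass C) : Prop :=
  ∀ ⦃X Y : C⦄, X ∈ P → Y ∈ P → ∀ f : X ⟶ Y, ∃ (K : C) (k : K ⟶ X), IsWeakKernelOn P N f k

/-- The condition (∗π₀) interpreted in the full subcategory `P`. -/
def StarPi0On (P : Set C) (N : MorClass C) {X Y : C} (f₁ f₂ : X ⟶ Y) : Prop :=
  ∀ ⦃K : C⦄ (k : K ⟶ X), IsWeakKernelOn P N f₁ k →
    ∀ ⦃Z : C⦄, Z ∈ P → ∀ g : Y ⟶ Z, (k ≫ f₁ ≫ g = k ≫ f₂ ≫ g ↔ f₁ ≫ g = f₂ ≫ g)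

/-- Every internal reflexive graph of `C` satisfies (∗π₀). -/
def ReflGraphsStarPi0 (N : MorClass C) : Prop :=
  ∀ ⦃G₁ G₀ : C⦄ (d c : G₁ ⟶ G₀) (e : G₀ ⟶ G₁), e ≫ d = 𝟙 G₀ → e ≫ c = 𝟙 G₀ →
    StarPi0 N d c

/-- Every internal reflexive graph of the full subcategory `P` satisfies (∗π₀). -/
def ReflGraphsStarPi0On (P : Set C) (N : MorClass C) : Prop :=
  ∀ ⦃G₁ G₀ : C⦄, G₁ ∈ P → G₀ ∈ P → ∀ (d c : G₁ ⟶ G₀) (e : G₀ ⟶ G₁),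
    e ≫ d = 𝟙 G₀ → e ≫ c = 𝟙 G₀ → StarPi0On P N d c

/-- Every regular epimorphism is a coequalizer of its kernel star (star-regularity condition). -/
def RegEpisCoeqOfKernelStar (N : MorClass C) : Prop :=
  ∀ ⦃X Y : C⦄ (f : X ⟶ Y), IsRegEpi f →
    ∀ ⦃P : C⦄ (u v : P ⟶ X), IsKernelPairOf f u v →
      ∀ ⦃K : C⦄ (k : K ⟶ P), IsNKernel N u k →
        IsCoequalizerOf (k ≫ u) (k ≫ v) f

/-- `f` is `N`-saturating. -/
def IsSaturating (N : MorClass C) {P' Y : C} (f : P' ⟶ Y) : Prop :=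
  ∀ ⦃X : C⦄ (n : X ⟶ Y), N n →
    ∃ (Z : C) (g : Z ⟶ X) (m : Z ⟶ P'), IsRegEpi g ∧ N m ∧ m ≫ f = g ≫ n

/-- `C` is a regular completion of `P`: `P` is a projective cover and every object of `C`
admits a monomorphism into a finite product of `P`-objects (expressed via a jointly monic
finite family). -/
def IsRegularCompletionOf (P : Set C) : Prop :=
  IsProjectiveCover P ∧
    ∀ X : C, ∃ (n : ℕ) (obj : Fin n → C) (_ : ∀ i, obj i ∈ P) (m : ∀ i, X ⟶ obj i),
      ∀ ⦃W : C⦄ (a b : W ⟶ X), (∀ i, a ≫ m i = b ≫ m i) → a = b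

/-- `C` is pointed via the ideal `N` of null morphisms. -/
def IsPointedVia (N : MorClass C) : Prop :=
  IsMorIdeal N ∧ ∀ X Y : C, ∃! f : X ⟶ Y, N f

/-- The full subcategory `P` is pointed via the ideal `N` of null morphisms. -/
def IsPointedOn (P : Set C) (N : MorClass C) : Prop :=
  IsMorIdealOn P N ∧ ∀ ⦃X Y : C⦄, X ∈ P → Y ∈ P → ∃! f : X ⟶ Y, N f

/-- `f` is a normal epimorphism (a cokernel) with respect to the ideal `N`. -/
def IsNormalEpi (N : MorClass C) {X Y : C} (f : X ⟶ Y) : Prop :=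
  ∃ (A : C) (h : A ⟶ X), N (h ≫ f) ∧
    ∀ ⦃Z : C⦄ (g : X ⟶ Z), N (h ≫ g) → ∃! t : Y ⟶ Z, f ≫ t = g

/-- Inclusion of classes of morphisms. -/
def MorClassLe (N N' : MorClass C) : Prop := ∀ ⦃X Y : C⦄ (f : X ⟶ Y), N f → N' f

/-! Every object of `C` is a regular quotient of a `P`-object and `P`-objects are projective, so a
morphism of `N^C` out of a `P`-object factors as `n ≫ ε` with `n ∈ N` and `ε` a regular epi; this
gives `(N^C)_P = N`. Conversely, `M` descends along regular epis because the `M`-kernel of an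
identity is a mono through which every morphism of `M` factors, and saturation together with the
splitting of regular epis onto `P`-objects provides, for `f ∈ M`, an `M`-morphism between
`P`-covers; this gives `(M_P)^C = M`. The `N^C`-kernel of `f : X ⟶ Y` is the image of `k ≫ π₁`,
where `π₁, π₂` are the projections of the pullback of `f` along a `P`-cover of `Y` and `k` is a
weak `N`-kernel of (a `P`-cover of) `π₂`. -/

section RegularEpi

theorem isCoequalizerOf_iff_nonempty_isColimit {P X Y : C} {u v : P ⟶ X} {f : X ⟶ Y}
    (w : u ≫ f = v ≫ f) : IsCoequalizerOf u v f ↔ Nonempty (IsColimit (Cofork.ofπ f w)) :=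
  ⟨fun h => ⟨Cofork.IsColimit.ofExistsUnique fun s => h.2 s.π s.condition⟩,
    fun ⟨hc⟩ => ⟨w, fun _ g hg => Cofork.IsColimit.existsUnique hc g hg⟩⟩

theorem isRegEpi_iff_isRegularEpi {X Y : C} (f : X ⟶ Y) : IsRegEpi f ↔ IsRegularEpi f := by
  constructor
  · rintro ⟨W, u, v, h⟩
    obtain ⟨hc⟩ := (isCoequalizerOf_iff_nonempty_isColimit h.1).1 h
    exact ⟨⟨⟨W, u, v, h.1, hc⟩⟩⟩
  · rintro ⟨⟨r⟩⟩
    exact ⟨r.W, r.left, r.right, (isCoequalizerOf_iff_nonempty_isColimit r.w).2 ⟨r.isColimit⟩⟩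

theorem isRegEpi_id (X : C) : IsRegEpi (𝟙 X) :=
  (isRegEpi_iff_isRegularEpi _).2 inferInstance

theorem IsRegEpi.exists_lift {A B X Y : C} {e : A ⟶ B} (he : IsRegEpi e) {m : X ⟶ Y} [Mono m]
    {s : A ⟶ X} {t : B ⟶ Y} (hc : s ≫ m = e ≫ t) : ∃ d : B ⟶ X, e ≫ d = s ∧ d ≫ m = t := by
  have := (isRegEpi_iff_isRegularEpi e).1 he
  have sq : CommSq s e m t := ⟨hc⟩
  exact ⟨sq.lift, sq.fac_left, sq.fac_right⟩

theorem CategoryTheory.IsPullback.isPullbackSq {P X Y Z : C} {p₁ : P ⟶ X} {p₂ : P ⟶ Y} {f : X ⟶ Z}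
    {g : Y ⟶ Z} (h : IsPullback p₁ p₂ f g) : IsPullbackSq p₁ p₂ f g :=
  ⟨h.w, fun _ q₁ q₂ hq => ⟨h.lift q₁ q₂ hq, ⟨h.lift_fst q₁ q₂ hq, h.lift_snd q₁ q₂ hq⟩,
    fun _ hw => h.hom_ext (by simp [hw.1]) (by simp [hw.2])⟩⟩

theorem IsRegularCat.regular (hC : IsRegularCat C) : Regular C where
  toHasFiniteLimits := hC.hasFiniteLimits
  hasCoequalizer_of_isKernelPair {_ _ _ f g₁ g₂} h := by
    obtain ⟨_, q, hq⟩ := hC.coeqOfKernelPairs f g₁ g₂ h.isPullbackSq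
    obtain ⟨hc⟩ := (isCoequalizerOf_iff_nonempty_isColimit hq.1).1 hq
    exact HasColimit.mk ⟨_, hc⟩
  regularEpiIsStableUnderBaseChange := ⟨fun sq hg =>
    (isRegEpi_iff_isRegularEpi _).1 <|
      hC.regEpiStable _ _ _ _ sq.flip.isPullbackSq ((isRegEpi_iff_isRegularEpi _).2 hg)⟩

theorem exists_isRegEpi_mono_fac [Regular C] {X Z : C} (h : X ⟶ Z) :
    ∃ (Q : C) (q : X ⟶ Q) (m : Q ⟶ Z), IsRegEpi q ∧ Mono m ∧ q ≫ m = h :=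
  ⟨_, _, _, (isRegEpi_iff_isRegularEpi _).2 inferInstance, inferInstance,
    (Regular.strongEpiMonoFactorisation h).fac⟩

end RegularEpi

section Ideal

variable {M : MorClass C}

theorem IsNKernel.mono (hM : IsMorIdeal M) {K X Y : C} {f : X ⟶ Y} {k : K ⟶ X}
    (hk : IsNKernel M f k) : Mono k :=
  ⟨fun x y hxy => by
    obtain ⟨_, -, hu⟩ := hk.2 (x ≫ k) (by rw [Category.assoc]; exact hM.1 x _ hk.1)
    exact (hu x rfl).trans (hu y hxy.symm).symm⟩

theorem IsMorIdeal.of_isRegEpi_comp (hM : IsMorIdeal M) (hMK : HasNKernels M) {A X Y : C}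
    {e : A ⟶ X} (he : IsRegEpi e) {f : X ⟶ Y} (h : M (e ≫ f)) : M f := by
  obtain ⟨K, κ, hκ⟩ := hMK (𝟙 Y)
  have := hκ.mono hM
  obtain ⟨w, hw, -⟩ := hκ.2 (e ≫ f) (by rwa [Category.comp_id])
  obtain ⟨d, -, rfl⟩ := he.exists_lift hw
  exact hM.1 d κ (by simpa using hκ.1)

theorem IsMorIdeal.isMorIdealOn_restClass (hM : IsMorIdeal M) (P : Set C) :
    IsMorIdealOn P (restClass P M) :=
  ⟨fun _ _ _ hf => ⟨hf.1, hf.2.1⟩,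
    fun _ _ _ f g hX hg => ⟨hX, hg.2.1, hM.1 f g hg.2.2⟩,
    fun _ _ _ f g hZ hf => ⟨hf.1, hZ, hM.2 f g hf.2.2⟩⟩

theorem extClass_of_mem {P : Set C} {N : MorClass C} (hN : IsMorIdealOn P N) {X Y : C}
    {f : X ⟶ Y} (hf : N f) : extClass P N f :=
  ⟨X, Y, (hN.1 f hf).1, (hN.1 f hf).2, f, 𝟙 X, 𝟙 Y, isRegEpi_id X, isRegEpi_id Y, hf, by simp⟩

theorem extClass_mono {P : Set C} {N N' : MorClass C} (h : MorClassLe N N') :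
    MorClassLe (extClass P N) (extClass P N') :=
  fun _ _ _ ⟨A, B, hA, hB, n, e, e', he, he', hn, hc⟩ =>
    ⟨A, B, hA, hB, n, e, e', he, he', h n hn, hc⟩

theorem restClass_mono {P : Set C} {M M' : MorClass C} (h : MorClassLe M M') :
    MorClassLe (restClass P M) (restClass P M') :=
  fun _ _ f ⟨hX, hY, hf⟩ => ⟨hX, hY, h f hf⟩

end Ideal

namespace IsProjectiveCover

variable {P : Set C} {N M : MorClass C}

theorem exists_eq_comp_of_extClass (hP : IsProjectiveCover P) (hN : IsMorIdealOn P N) {A Y : C}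
    (hA : A ∈ P) {h : A ⟶ Y} (hh : extClass P N h) :
    ∃ (B : C) (_ : B ∈ P) (n : A ⟶ B) (ε : B ⟶ Y), IsRegEpi ε ∧ N n ∧ h = n ≫ ε := by
  obtain ⟨_, B, -, hB, n, e, ε, he, hε, hn, hc⟩ := hh
  obtain ⟨s, hs⟩ := hP.proj hA e he (𝟙 A)
  exact ⟨B, hB, s ≫ n, ε, hε, hN.2.1 s n hA hn, by rw [← Category.id_comp h, ← hs,
    Category.assoc, hc, Category.assoc]⟩

theorem isMorIdeal_extClass (hP : IsProjectiveCover P) (hN : IsMorIdealOn P N) :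
    IsMorIdeal (extClass P N) := by
  constructor
  · rintro W X Y f g ⟨A, B, hA, hB, n, e, e', he, he', hn, hc⟩
    obtain ⟨A', hA', c, hc'⟩ := hP.covers W
    obtain ⟨a, ha⟩ := hP.proj hA' e he (c ≫ f)
    exact ⟨A', B, hA', hB, a ≫ n, c, e', hc', he', hN.2.1 a n hA' hn, by
      rw [← reassoc_of% ha, hc, Category.assoc]⟩
  · rintro X Y Z f g ⟨A, B, hA, hB, n, e, e', he, he', hn, hc⟩
    obtain ⟨B', hB', c, hc'⟩ := hP.covers Z
    obtain ⟨b, hb⟩ := hP.proj hB c hc' (e' ≫ g)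
    exact ⟨A, B', hA, hB', n ≫ b, e, c, he, hc', hN.2.2 n b hB' hn, by
      rw [reassoc_of% hc, ← hb, Category.assoc]⟩

theorem isSaturating_extClass (hP : IsProjectiveCover P) (hN : IsMorIdealOn P N) {X Y : C}
    {f : X ⟶ Y} (hf : IsRegEpi f) : IsSaturating (extClass P N) f := by
  rintro _ _ ⟨A, B, -, hB, n, e, e', he, -, hn, hc⟩
  obtain ⟨b, hb⟩ := hP.proj hB f hf e'
  exact ⟨A, e, n ≫ b, he, (hP.isMorIdeal_extClass hN).2 n b (extClass_of_mem hN hn), by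
    rw [Category.assoc, hb, hc]⟩

theorem isNKernel_extClass_of_mono (hP : IsProjectiveCover P) (hN : IsMorIdealOn P N)
    {K X Y : C} {f : X ⟶ Y} {m : K ⟶ X} [Mono m] (hm : extClass P N (m ≫ f))
    (hfac : ∀ ⦃T : C⦄, T ∈ P → ∀ k : T ⟶ X, extClass P N (k ≫ f) → ∃ u : T ⟶ K, u ≫ m = k) :
    IsNKernel (extClass P N) f m := by
  refine ⟨hm, fun K' k hk => ?_⟩
  obtain ⟨A, -, hA, -, -, e, -, he, -⟩ := id hk
  obtain ⟨u, hu⟩ := hfac hA (e ≫ k) <| by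
    rw [Category.assoc]; exact (hP.isMorIdeal_extClass hN).1 e _ hk
  obtain ⟨d, -, hd⟩ := he.exists_lift hu
  exact ⟨d, hd, fun d' hd' => by rw [← cancel_mono m, hd', hd]⟩

theorem hasNKernels_extClass [Regular C] (hP : IsProjectiveCover P) (hN : IsMorIdealOn P N)
    (hNK : HasWeakKernelsOn P N) : HasNKernels (extClass P N) := by
  intro X Y f
  obtain ⟨B, hB, ε, hε⟩ := hP.covers Y
  obtain ⟨A, hA, e, he⟩ := hP.covers (pullback f ε)
  obtain ⟨K₀, k₀, hK₀, hk₀, hk₀fac⟩ := hNK hA hB (e ≫ pullback.snd f ε)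
  obtain ⟨K, q, m, hq, _, hqm⟩ := exists_isRegEpi_mono_fac (k₀ ≫ e ≫ pullback.fst f ε)
  refine ⟨K, m, hP.isNKernel_extClass_of_mono hN ⟨K₀, B, hK₀, hB, _, q, ε, hq, hε, hk₀, ?_⟩ ?_⟩
  · simp [reassoc_of% hqm, pullback.condition]
  · intro T hT k hk
    obtain ⟨B₁, hB₁, n, ε₁, -, hn, hkf⟩ := hP.exists_eq_comp_of_extClass hN hT hk
    obtain ⟨b, hb⟩ := hP.proj hB₁ ε hε ε₁
    obtain ⟨a, ha⟩ := hP.proj hT e he (pullback.lift k (n ≫ b) (by rw [hkf, Category.assoc, hb]))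
    obtain ⟨x, hx⟩ := hk₀fac hT a <| by
      rw [reassoc_of% ha, pullback.lift_snd]; exact hN.2.2 n b hB hn
    exact ⟨x ≫ q, by rw [Category.assoc, hqm, reassoc_of% hx, reassoc_of% ha, pullback.lift_fst]⟩

theorem hasWeakKernelsOn_restClass (hP : IsProjectiveCover P) (hM : IsMorIdeal M)
    (hMK : HasNKernels M) : HasWeakKernelsOn P (restClass P M) := by
  intro X Y _ hY f
  obtain ⟨K, κ, hκ⟩ := hMK f
  obtain ⟨Q, hQ, p, hp⟩ := hP.covers K
  refine ⟨Q, p ≫ κ, hQ, ⟨hQ, hY, by rw [Category.assoc]; exact hM.1 p _ hκ.1⟩, ?_⟩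
  intro T hT k hk
  obtain ⟨u, hu, -⟩ := hκ.2 k hk.2.2
  obtain ⟨w, hw⟩ := hP.proj hT p hp u
  exact ⟨w, by rw [← Category.assoc, hw, hu]⟩

theorem restClass_extClass (hP : IsProjectiveCover P) (hN : IsMorIdealOn P N) :
    restClass P (extClass P N) = N := by
  funext X Y f
  apply propext
  constructor
  · rintro ⟨hX, hY, hf⟩
    obtain ⟨_, _, n, ε, -, hn, rfl⟩ := hP.exists_eq_comp_of_extClass hN hX hf
    exact hN.2.2 n ε hY hn
  · intro hf
    exact ⟨(hN.1 f hf).1, (hN.1 f hf).2, extClass_of_mem hN hf⟩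

theorem extClass_restClass (hP : IsProjectiveCover P) (hM : IsMorIdeal M) (hMK : HasNKernels M)
    (hsat : ∀ ⦃X Y : C⦄ (f : X ⟶ Y), IsRegEpi f → IsSaturating M f) :
    extClass P (restClass P M) = M := by
  funext X Y f
  apply propext
  constructor
  · rintro ⟨_, _, -, -, n, e, e', he, -, ⟨-, -, hn⟩, hc⟩
    exact hM.of_isRegEpi_comp hMK he (hc ▸ hM.2 n e' hn)
  · intro hf
    obtain ⟨A, hA, a, ha⟩ := hP.covers X
    obtain ⟨B, hB, e', he'⟩ := hP.covers Y
    obtain ⟨_, g, m, hg, hm, hmg⟩ := hsat e' he' (a ≫ f) (hM.1 a f hf)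
    obtain ⟨s, hs⟩ := hP.proj hA g hg (𝟙 A)
    exact ⟨A, B, hA, hB, s ≫ m, a, e', ha, he', ⟨hA, hB, hM.1 s m hm⟩, by
      rw [Category.assoc, hmg, reassoc_of% hs]⟩

end IsProjectiveCover

/-- For a regular category C with projective cover P, the assignments
N ↦ N^C and M ↦ M_P give an order isomorphism between the poset of ideals of P admitting
weak kernels and the poset of ideals of C admitting kernels for which all regular
epimorphisms are saturating. -/
theorem statement10 (hC : IsRegularCat C) (P : Set C) (hP : IsProjectiveCover P) :
    (∀ N : MorClass C, IsMorIdealOn P N → HasWeakKernelsOn P N →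
        IsMorIdeal (extClass P N) ∧ HasNKernels (extClass P N) ∧
          (∀ ⦃X Y : C⦄ (f : X ⟶ Y), IsRegEpi f → IsSaturating (extClass P N) f)) ∧
    (∀ M : MorClass C, IsMorIdeal M → HasNKernels M →
        (∀ ⦃X Y : C⦄ (f : X ⟶ Y), IsRegEpi f → IsSaturating M f) →
        IsMorIdealOn P (restClass P M) ∧ HasWeakKernelsOn P (restClass P M)) ∧
    (∀ N : MorClass C, IsMorIdealOn P N → HasWeakKernelsOn P N →
        restClass P (extClass P N) = N) ∧
    (∀ M : MorClass C, IsMorIdeal M → HasNKernels M →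
        (∀ ⦃X Y : C⦄ (f : X ⟶ Y), IsRegEpi f → IsSaturating M f) →
        extClass P (restClass P M) = M) ∧
    (∀ N N' : MorClass C, MorClassLe N N' → MorClassLe (extClass P N) (extClass P N')) ∧
    (∀ M M' : MorClass C, MorClassLe M M' → MorClassLe (restClass P M) (restClass P M')) := by
  have := hC.regular
  exact ⟨fun N hN hNK => ⟨hP.isMorIdeal_extClass hN, hP.hasNKernels_extClass hN hNK,
      fun _ _ _ hf => hP.isSaturating_extClass hN hf⟩,
    fun M hM hMK _ => ⟨hM.isMorIdealOn_restClass P, hP.hasWeakKernelsOn_restClass hM hMK⟩,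
    fun N hN _ => hP.restClass_extClass hN,
    fun M hM hMK hsat => hP.extClass_restClass hM hMK hsat,
    fun _ _ => extClass_mono,
    fun _ _ => restClass_mono⟩
end

section
/- Let (C, N) be a regular multi-pointed category with N-kernels, having kernel pairs and coequalizers of kernel pairs. Then every regular epimorphism in C is a coequalizer of its kernel star if and only if every internal reflexive graph in C satisfies (∗π₀). In particular, a regular multi-pointed category with kernels is star-regular if and only if every internal reflexive graph satisfies (∗π₀). -/
open CategoryTheory CategoryTheory.Limits

universe v u

variable {C : Type u} [Category.{v} C]

namespace IsKernelPairOf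

theorem exists_diagonal {P X Y : C} {f : X ⟶ Y} {u v : P ⟶ X} (h : IsKernelPairOf f u v) :
    ∃ δ : X ⟶ P, δ ≫ u = 𝟙 X ∧ δ ≫ v = 𝟙 X :=
  (h.2 (𝟙 X) (𝟙 X) rfl).exists

theorem of_comp {P X Y Q : C} {q : X ⟶ Q} {m : Q ⟶ Y} {u v : P ⟶ X}
    (h : IsKernelPairOf (q ≫ m) u v) (hq : u ≫ q = v ≫ q) : IsKernelPairOf q u v :=
  ⟨hq, fun _ u' v' huv => h.2 u' v' (by rw [reassoc_of% huv])⟩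

theorem comp_section_comp {P X Y W : C} {d : X ⟶ Y} {d₁ d₂ : P ⟶ X} {e : Y ⟶ X}
    (h : IsKernelPairOf d d₁ d₂) (hed : e ≫ d = 𝟙 Y) {x : X ⟶ W} (hx : d₁ ≫ x = d₂ ≫ x) :
    d ≫ e ≫ x = x := by
  obtain ⟨σ, ⟨hσ₁, hσ₂⟩, -⟩ := h.2 (𝟙 X) (d ≫ e) (by simp [hed])
  calc d ≫ e ≫ x = σ ≫ d₂ ≫ x := by rw [reassoc_of% hσ₂]
    _ = σ ≫ d₁ ≫ x := by rw [hx]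
    _ = x := by rw [reassoc_of% hσ₁]

end IsKernelPairOf

theorem IsCoequalizerOf.isRegEpi {P X Y : C} {u v : P ⟶ X} {f : X ⟶ Y}
    (h : IsCoequalizerOf u v f) : IsRegEpi f :=
  ⟨P, u, v, h⟩

theorem IsCoequalizerOf.comp_eq_comp {P X Y W Z : C} {a b : P ⟶ X} {f : X ⟶ Y}
    (h : IsCoequalizerOf a b f) {u v : W ⟶ X} (huv : u ≫ f = v ≫ f) {x : X ⟶ Z}
    (hx : a ≫ x = b ≫ x) : u ≫ x = v ≫ x := by
  obtain ⟨t, rfl, -⟩ := h.2 x hx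
  rw [reassoc_of% huv]

theorem IsRegEpi.isCoequalizerOf_of_isKernelPairOf {P X Y : C} {f : X ⟶ Y} {u v : P ⟶ X}
    (hf : IsRegEpi f) (h : IsKernelPairOf f u v) : IsCoequalizerOf u v f := by
  obtain ⟨A, a, b, hab⟩ := hf
  refine ⟨h.1, fun Z g hg => hab.2 g ?_⟩
  obtain ⟨w, ⟨rfl, rfl⟩, -⟩ := h.2 a b hab.1
  simp only [Category.assoc, hg]

section

variable {N : MorClass C}

theorem IsNKernel.isWeakKernel {K X Y : C} {f : X ⟶ Y} {k : K ⟶ X} (h : IsNKernel N f k) :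
    IsWeakKernel N f k :=
  ⟨h.1, fun _ k' hk' => (h.2 k' hk').exists⟩

theorem starPi0_of_imp {X Y : C} {f₁ f₂ : X ⟶ Y}
    (h : ∀ ⦃K : C⦄ (k : K ⟶ X), IsWeakKernel N f₁ k →
      ∀ ⦃Z : C⦄ (g : Y ⟶ Z), k ≫ f₁ ≫ g = k ≫ f₂ ≫ g → f₁ ≫ g = f₂ ≫ g) :
    StarPi0 N f₁ f₂ :=
  fun _ k hk _ g => ⟨h k hk g, fun hg => by rw [hg]⟩

theorem IsWeakKernel.comp_eq_comp {K X Y Z W : C} {f₁ f₂ : X ⟶ Y} {k : K ⟶ X}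
    (hk : IsWeakKernel N f₁ k) {g : Y ⟶ Z} (hg : k ≫ f₁ ≫ g = k ≫ f₂ ≫ g) {y : W ⟶ X}
    (hy : N (y ≫ f₁)) : y ≫ f₁ ≫ g = y ≫ f₂ ≫ g := by
  obtain ⟨t, rfl⟩ := hk.2 y hy
  simp only [Category.assoc, hg]

/- Given a reflexive graph `(d, c)` and `g` with `k d g = k c g` for a weak `N`-kernel `k`
of `d`, let `q` be the coequalizer of the kernel pair `(d₁, d₂)` of `d`. The legs of the
kernel star of `q` become null after `d`, so factor through `k`; hence `c g` coequalizes that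
star, thus factors through `q`, so it is constant on the fibres of `d` and equals `d e c g = d g`. -/
theorem reflGraphsStarPi0_of_regEpisCoeqOfKernelStar (hN : IsMorIdeal N) (hk : HasNKernels N)
    (hkp : HasKernelPairs C)
    (hcoeq : ∀ ⦃P X Y : C⦄ (f : X ⟶ Y) (u v : P ⟶ X), IsKernelPairOf f u v →
      ∃ (Q : C) (q : X ⟶ Q), IsCoequalizerOf u v q)
    (hstar : RegEpisCoeqOfKernelStar N) : ReflGraphsStarPi0 N := by
  intro G₁ G₀ d c e hed hec
  refine starPi0_of_imp fun K k hkd Z g hg => ?_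
  obtain ⟨D, d₁, d₂, hD⟩ := hkp d
  obtain ⟨Q, q, hq⟩ := hcoeq d d₁ d₂ hD
  obtain ⟨m, rfl, -⟩ := hq.2 d hD.1
  obtain ⟨S, κ, hκ⟩ := hk d₁
  have hstar_q := hstar q hq.isRegEpi d₁ d₂ (hD.of_comp hq.1) κ hκ
  have hκ₁ : N ((κ ≫ d₁) ≫ q ≫ m) := hN.2 _ _ hκ.1
  have hκ₂ : N ((κ ≫ d₂) ≫ q ≫ m) := by rwa [Category.assoc, ← hD.1, ← Category.assoc]
  have hstar_cg : (κ ≫ d₁) ≫ c ≫ g = (κ ≫ d₂) ≫ c ≫ g := by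
    rw [← hkd.comp_eq_comp hg hκ₁, ← hkd.comp_eq_comp hg hκ₂]
    simp only [Category.assoc, reassoc_of% hD.1]
  have hfib : d₁ ≫ c ≫ g = d₂ ≫ c ≫ g := hstar_q.comp_eq_comp hq.1 hstar_cg
  calc (q ≫ m) ≫ g = (q ≫ m) ≫ e ≫ c ≫ g := by rw [reassoc_of% hec]
    _ = c ≫ g := hD.comp_section_comp hed hfib

theorem regEpisCoeqOfKernelStar_of_reflGraphsStarPi0 (hrg : ReflGraphsStarPi0 N) :
    RegEpisCoeqOfKernelStar N := by
  intro X Y f hf P u v huv K k hk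
  obtain ⟨δ, hδu, hδv⟩ := huv.exists_diagonal
  have hsp := hrg u v δ hδu hδv k hk.isWeakKernel
  refine ⟨by simp only [Category.assoc, huv.1], fun Z g hg => ?_⟩
  exact (hf.isCoequalizerOf_of_isKernelPairOf huv).2 g ((hsp g).1 (by simpa using hg))

end

theorem statement11_general (N : MorClass C) (hN : IsMorIdeal N)
    (hk : HasNKernels N) (hkp : HasKernelPairs C)
    (hcoeq : ∀ ⦃P X Y : C⦄ (f : X ⟶ Y) (u v : P ⟶ X), IsKernelPairOf f u v →
      ∃ (Q : C) (q : X ⟶ Q), IsCoequalizerOf u v q) :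
    RegEpisCoeqOfKernelStar N ↔ ReflGraphsStarPi0 N :=
  ⟨reflGraphsStarPi0_of_regEpisCoeqOfKernelStar hN hk hkp hcoeq,
    regEpisCoeqOfKernelStar_of_reflGraphsStarPi0⟩

/-- Let (C, N) be a regular multi-pointed category with N-kernels, having
kernel pairs and coequalizers of kernel pairs. Then every regular epimorphism is a
coequalizer of its kernel star iff every internal reflexive graph satisfies (∗π₀). -/
theorem statement11 (hC : IsRegularCat C) (N : MorClass C) (hN : IsMorIdeal N)
    (hk : HasNKernels N) (hkp : HasKernelPairs C)
    (hcoeq : ∀ ⦃P X Y : C⦄ (f : X ⟶ Y) (u v : P ⟶ X), IsKernelPairOf f u v →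
      ∃ (Q : C) (q : X ⟶ Q), IsCoequalizerOf u v q) :
    RegEpisCoeqOfKernelStar N ↔ ReflGraphsStarPi0 N :=
  statement11_general N hN hk hkp hcoeq
end

section
/- Let (C, N) be a regular multi-pointed category with N-kernels, and let P be a projective cover of C. If (C, N) is star-regular, then every internal reflexive graph in P satisfies (∗π₀) with respect to the restricted ideal N_P. -/
open CategoryTheory CategoryTheory.Limits

universe v u

variable {C : Type u} [Category.{v} C]

/-!
The common splitting `e` makes `d` a regular epimorphism, so by star-regularity `d` is the
coequalizer of the kernel star `(k₀ ≫ u, k₀ ≫ v)` of its kernel pair `(u, v)`. Both legs `x` of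
the star satisfy `N (x ≫ d)`, and on such `x` the composites `d ≫ g` and `c ≫ g` agree; hence
`c ≫ g = d ≫ h`, and precomposing with `e` gives `h = g`. That `d ≫ g` and `c ≫ g` agree on
every such `x`, and not only on the weak kernel `k` computed in `P`, follows by covering the
domain of `x` by a regular epimorphism from a `P`-object, through which `x` then factors via `k`.
-/

lemma IsRegEpi.of_comp_eq_id {X Y : C} {d : X ⟶ Y} {e : Y ⟶ X} (hed : e ≫ d = 𝟙 Y) :
    IsRegEpi d := by
  refine ⟨X, d ≫ e, 𝟙 X, by simp [hed], fun W f hf => ⟨e ≫ f, ?_, fun h hh => ?_⟩⟩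
  · rw [Category.id_comp] at hf
    exact (Category.assoc _ _ _).symm.trans hf
  · rw [← Category.id_comp h, ← hed, Category.assoc, hh]

lemma IsRegEpi.epi {X Y : C} {p : X ⟶ Y} (hp : IsRegEpi p) : Epi p := by
  obtain ⟨R, x, y, hcoeq⟩ := hp
  refine ⟨fun a b hab => ?_⟩
  obtain ⟨t, -, ht⟩ := hcoeq.2 (p ≫ a) (by simp only [← Category.assoc, hcoeq.1])
  rw [ht a rfl, ht b hab.symm]

lemma hasKernelPairs_of_hasPullbacks [HasPullbacks C] : HasKernelPairs C := by
  intro X Y f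
  refine ⟨pullback f f, pullback.fst f f, pullback.snd f f, pullback.condition,
    fun Q u v huv => ⟨pullback.lift u v huv,
      ⟨pullback.lift_fst _ _ _, pullback.lift_snd _ _ _⟩, ?_⟩⟩
  rintro w ⟨hwu, hwv⟩
  apply pullback.hom_ext
  · rw [hwu, pullback.lift_fst]
  · rw [hwv, pullback.lift_snd]

lemma RegEpisCoeqOfKernelStar.comp_eq_comp_of_forall_null {N : MorClass C}
    (hsr : RegEpisCoeqOfKernelStar N) (hN : IsMorIdeal N) (hk : HasNKernels N)
    (hkp : HasKernelPairs C) {G₁ G₀ Z : C} {d c : G₁ ⟶ G₀} {e : G₀ ⟶ G₁}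
    (hed : e ≫ d = 𝟙 G₀) (hec : e ≫ c = 𝟙 G₀) {g : G₀ ⟶ Z}
    (hnull : ∀ ⦃T : C⦄ (x : T ⟶ G₁), N (x ≫ d) → x ≫ d ≫ g = x ≫ c ≫ g) :
    d ≫ g = c ≫ g := by
  obtain ⟨R, u, v, huv⟩ := hkp d
  obtain ⟨S, k₀, hk₀⟩ := hk u
  have hcoeq := hsr d (IsRegEpi.of_comp_eq_id hed) u v huv k₀ hk₀
  have hstar : (k₀ ≫ u) ≫ d = (k₀ ≫ v) ≫ d := by simp only [Category.assoc, huv.1]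
  have hu : N ((k₀ ≫ u) ≫ d) := hN.2 _ _ hk₀.1
  have key : (k₀ ≫ u) ≫ c ≫ g = (k₀ ≫ v) ≫ c ≫ g :=
    calc (k₀ ≫ u) ≫ c ≫ g = (k₀ ≫ u) ≫ d ≫ g := (hnull _ hu).symm
      _ = (k₀ ≫ v) ≫ d ≫ g := by rw [← Category.assoc, hstar, Category.assoc]
      _ = (k₀ ≫ v) ≫ c ≫ g := hnull _ (hstar ▸ hu)
  obtain ⟨h, hh, -⟩ := hcoeq.2 (c ≫ g) key
  have hhg : h = g :=
    calc h = e ≫ d ≫ h := by rw [← Category.assoc, hed, Category.id_comp]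
      _ = g := by rw [hh, ← Category.assoc, hec, Category.id_comp]
  exact hhg ▸ hh

lemma IsWeakKernelOn.comp_eq_comp_of_null {N : MorClass C} (hN : IsMorIdeal N) {P : Set C}
    (hP : IsProjectiveCover P) {K X Y Z T : C} {d c : X ⟶ Y} {k : K ⟶ X} (hY : Y ∈ P)
    (hk : IsWeakKernelOn P (restClass P N) d k) {g : Y ⟶ Z}
    (hkg : k ≫ d ≫ g = k ≫ c ≫ g) {x : T ⟶ X} (hx : N (x ≫ d)) :
    x ≫ d ≫ g = x ≫ c ≫ g := by
  obtain ⟨Q, hQ, p, hp⟩ := hP.covers T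
  have := hp.epi
  obtain ⟨w, hw⟩ := hk.2.2 hQ (p ≫ x)
    ⟨hQ, hY, by rw [Category.assoc]; exact hN.1 p _ hx⟩
  rw [← cancel_epi p, ← Category.assoc, ← hw, Category.assoc, hkg, ← Category.assoc, hw,
    Category.assoc]

/-- Let (C, N) be a regular multi-pointed category with N-kernels and
projective cover P. If (C, N) is star-regular, then every internal reflexive graph in P
satisfies (∗π₀) with respect to the restricted ideal N_P. -/
theorem statement12 (hC : IsRegularCat C) (N : MorClass C) (hN : IsMorIdeal N)
    (hk : HasNKernels N) (P : Set C) (hP : IsProjectiveCover P)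
    (hsr : RegEpisCoeqOfKernelStar N) :
    ReflGraphsStarPi0On P (restClass P N) := by
  intro G₁ G₀ _ hG₀ d c e hed hec K k hkw Z _ g
  have := hC.hasFiniteLimits
  refine ⟨fun hkg => ?_, fun hdc => by rw [hdc]⟩
  exact hsr.comp_eq_comp_of_forall_null hN hk hasKernelPairs_of_hasPullbacks hed hec
    fun _ x hx => hkw.comp_eq_comp_of_null hN hP hG₀ hkg hx
end
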